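/- arXiv:2505.01937 — 2 statements merged into one kernel-verified Lean document; each statement's English description precedes it below -/
import Mathlib

section
/- For any real number q > 1 and any α ≥ 0, it holds that (1+α)^q / (1+qα) ≤ exp(q(q-1)α²/2). -/
/-!
Taking logarithms, the claim is `g α ≤ q (q - 1) α² / 2` for `g x = q log (1 + x) - log (1 + q x)`.
Since `g 0 = 0` and `g' x = q (q - 1) x / ((1 + x) (1 + q x)) ≤ q (q - 1) x` for `x ≥ 0`,
this follows by comparing `g` with `q (q - 1) x² / 2` on `[0, ∞)`.
-/

open Real Set

theorem hasDerivAt_mul_log_one_add_sub_log_one_add_mul {q x : ℝ} (hx : 0 < 1 + x)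
    (hqx : 0 < 1 + q * x) :
    HasDerivAt (fun x => q * log (1 + x) - log (1 + q * x))
      (q * (q - 1) * x / ((1 + x) * (1 + q * x))) x := by
  have hlog : HasDerivAt (fun x => log (1 + x)) (1 / (1 + x)) x := by
    simpa using ((hasDerivAt_id x).const_add 1).log hx.ne'
  have hlog_mul : HasDerivAt (fun x => log (1 + q * x)) (q / (1 + q * x)) x := by
    simpa using (((hasDerivAt_id x).const_mul q).const_add 1).log hqx.ne'
  refine ((hlog.const_mul q).sub hlog_mul).congr_deriv ?_
  field_simp
  ring

theorem div_one_add_mul_one_add_mul_le {q x : ℝ} (hq : 1 ≤ q) (hx : 0 ≤ x) :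
    q * (q - 1) * x / ((1 + x) * (1 + q * x)) ≤ q * (q - 1) * x := by
  have hq0 : 0 ≤ q := zero_le_one.trans hq
  apply div_le_self (by positivity)
  nlinarith [mul_nonneg hq0 hx]

theorem mul_log_one_add_sub_log_one_add_mul_le {q x : ℝ} (hq : 1 ≤ q) (hx : 0 ≤ x) :
    q * log (1 + x) - log (1 + q * x) ≤ q * (q - 1) * x ^ 2 / 2 := by
  have hq0 : 0 ≤ q := zero_le_one.trans hq
  set F : ℝ → ℝ := fun x => q * (q - 1) * x ^ 2 / 2 - (q * log (1 + x) - log (1 + q * x))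
  have hF : ∀ y ∈ Ici (0 : ℝ),
      HasDerivAt F (q * (q - 1) * y - q * (q - 1) * y / ((1 + y) * (1 + q * y))) y := by
    intro y (hy : 0 ≤ y)
    have hsq : HasDerivAt (fun y => q * (q - 1) * y ^ 2 / 2) (q * (q - 1) * y) y := by
      refine (((hasDerivAt_pow 2 y).const_mul (q * (q - 1))).div_const 2).congr_deriv ?_
      ring
    exact hsq.sub (hasDerivAt_mul_log_one_add_sub_log_one_add_mul (by positivity) (by positivity))
  have hmono : MonotoneOn F (Ici 0) := by
    refine monotoneOn_of_hasDerivWithinAt_nonneg (convex_Ici 0)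
      (fun y hy => (hF y hy).continuousAt.continuousWithinAt)
      (fun y hy => (hF y (interior_subset hy)).hasDerivWithinAt) fun y hy => ?_
    rw [interior_Ici] at hy
    exact sub_nonneg.2 (div_one_add_mul_one_add_mul_le hq (le_of_lt hy))
  have hF0 : F 0 = 0 := by simp [F]
  exact sub_nonneg.1 (hF0 ▸ hmono self_mem_Ici hx hx)

theorem stmt0 (q α : ℝ) (hq : 1 < q) (hα : 0 ≤ α) :
    (1 + α) ^ q / (1 + q * α) ≤ Real.exp (q * (q - 1) * α ^ 2 / 2) := by
  have hq0 : 0 ≤ q := zero_le_one.trans hq.le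
  have hα1 : 0 < 1 + α := by positivity
  have hqα : 0 < 1 + q * α := by positivity
  rw [div_le_iff₀ hqα, rpow_def_of_pos hα1, ← exp_log hqα, ← exp_add, exp_le_exp]
  linarith [mul_log_one_add_sub_log_one_add_mul_le hq.le hα]
end

section
/- Let π be a probability measure on ℝⁿ satisfying a Poincaré inequality with constant C_PI. Then for every 1-Lipschitz function f : ℝⁿ → ℝ and every t ≥ 0, π(f - E_π f ≥ t) ≤ 3 exp(-t / C_PI^{1/2}). -/
/-!
For a bounded smooth 1-Lipschitz `g` put `A c = ∫ exp (c * g)`. The Poincaré inequality applied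
to `exp (c * g)` gives `A (2c) - A c ^ 2 ≤ C c² A (2c)`. Hence, if `C λ² ≤ 1` and `c_k = λ / 2 ^ k`,
`A c_k ^ 2 ^ k ≤ exp (2⁻¹ ^ (k + 1)) * A c_{k+1} ^ 2 ^ (k + 1)`, while `A c_k ^ 2 ^ k` tends
to `exp (λ ∫ g)` because `A c = 1 + c ∫ g + O(c²)`. Summing the exponents gives
`∫ exp (λ g) ≤ e * exp (λ ∫ g)`. A general 1-Lipschitz `f` is the pointwise limit of mollified
truncations, Fatou's lemma carries the bound over to `f`, and the Chernoff bound with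
`λ = C^{-1/2}` and `e ≤ 3` gives the tail estimate.
-/

open MeasureTheory Filter Topology ContinuousLinearMap
open scoped Convolution ContDiff
open Real (exp)

variable {E : Type*} [NormedAddCommGroup E] [NormedSpace ℝ E] [MeasurableSpace E]

def PoincareInequality (μ : Measure E) (C : ℝ) : Prop :=
  ∀ f : E → ℝ, Differentiable ℝ f → Integrable f μ → Integrable (fun x => f x ^ 2) μ →
    Integrable (fun x => ‖fderiv ℝ f x‖ ^ 2) μ →
    ∫ x, (f x - ∫ y, f y ∂μ) ^ 2 ∂μ ≤ C * ∫ x, ‖fderiv ℝ f x‖ ^ 2 ∂μ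

theorem le_exp_two_mul_mul_of_one_sub_mul_le {q a b : ℝ} (hq₀ : 0 ≤ q) (hq : q ≤ 1 / 2)
    (ha : 0 ≤ a) (h : (1 - q) * a ≤ b) : a ≤ exp (2 * q) * b :=
  calc a ≤ (1 + 2 * q) * ((1 - q) * a) := by
        nlinarith [mul_nonneg (mul_nonneg hq₀ ha) (by linarith : 0 ≤ 1 - 2 * q)]
    _ ≤ exp (2 * q) * b := by
      gcongr
      · nlinarith
      · linarith [Real.add_one_le_exp (2 * q)]

theorem le_exp_one_sub_mul_of_le_exp_mul {b : ℕ → ℝ}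
    (hb : ∀ k, b k ≤ exp (2⁻¹ ^ (k + 1)) * b (k + 1)) (N : ℕ) :
    b 0 ≤ exp (1 - 2⁻¹ ^ N) * b N := by
  induction N with
  | zero => simp
  | succ N ih =>
    calc b 0 ≤ exp (1 - 2⁻¹ ^ N) * (exp (2⁻¹ ^ (N + 1)) * b (N + 1)) :=
          ih.trans (mul_le_mul_of_nonneg_left (hb N) (Real.exp_pos _).le)
      _ = exp (1 - 2⁻¹ ^ N + 2⁻¹ ^ (N + 1)) * b (N + 1) := by rw [Real.exp_add, mul_assoc]
      _ = exp (1 - 2⁻¹ ^ (N + 1)) * b (N + 1) := by ring_nf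

theorem integrable_exp_mul_of_abs_le {α : Type*} [MeasurableSpace α] {μ : Measure α}
    [IsFiniteMeasure μ] {g : α → ℝ} (hg : AEStronglyMeasurable g μ) {M : ℝ}
    (hM : ∀ x, |g x| ≤ M) (c : ℝ) : Integrable (fun x => exp (c * g x)) μ := by
  refine .of_bound (Real.continuous_exp.comp_aestronglyMeasurable (hg.const_mul c))
    (exp (|c| * M)) (ae_of_all _ fun x => ?_)
  rw [Real.norm_of_nonneg (Real.exp_pos _).le, Real.exp_le_exp]
  calc c * g x ≤ |c * g x| := le_abs_self _
    _ ≤ |c| * M := by rw [abs_mul]; exact mul_le_mul_of_nonneg_left (hM x) (abs_nonneg c)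

theorem integral_exp_mul_le_of_abs_le {α : Type*} [MeasurableSpace α] {μ : Measure α}
    [IsProbabilityMeasure μ] {g : α → ℝ} (hg : AEStronglyMeasurable g μ) {M c : ℝ}
    (hM : ∀ x, |g x| ≤ M) (hcM : |c| * M ≤ 1) :
    ∫ x, exp (c * g x) ∂μ ≤ exp (c * ∫ x, g x ∂μ + c ^ 2 * M ^ 2) := by
  have hgi : Integrable g μ := .of_bound hg M (ae_of_all _ hM)
  have hquad (x : α) : exp (c * g x) ≤ 1 + c * g x + c ^ 2 * M ^ 2 := by
    have hcg : |c * g x| ≤ |c| * M := by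
      rw [abs_mul]; exact mul_le_mul_of_nonneg_left (hM x) (abs_nonneg c)
    have hsq : (c * g x) ^ 2 ≤ c ^ 2 * M ^ 2 := by
      simpa only [sq_abs, mul_pow] using pow_le_pow_left₀ (abs_nonneg _) hcg 2
    linarith [(abs_le.1 (Real.abs_exp_sub_one_sub_id_le (hcg.trans hcM))).2]
  calc ∫ x, exp (c * g x) ∂μ ≤ ∫ x, (1 + c * g x + c ^ 2 * M ^ 2) ∂μ := by
        refine integral_mono_of_nonneg (ae_of_all _ fun x => (Real.exp_pos _).le) ?_
          (ae_of_all _ hquad)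
        fun_prop
    _ = 1 + c * ∫ x, g x ∂μ + c ^ 2 * M ^ 2 := by
        rw [integral_add (by fun_prop) (integrable_const _), integral_add (integrable_const _)
          (hgi.const_mul c), integral_const_mul]
        simp
    _ ≤ exp (c * ∫ x, g x ∂μ + c ^ 2 * M ^ 2) := by
        linarith [Real.add_one_le_exp (c * ∫ x, g x ∂μ + c ^ 2 * M ^ 2)]

theorem integrable_and_integral_le_of_tendsto {α : Type*} [MeasurableSpace α] {μ : Measure α}
    {F : ℕ → α → ℝ} {f : α → ℝ} {B : ℕ → ℝ} {b : ℝ} (hF_nonneg : ∀ n x, 0 ≤ F n x)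
    (hF : ∀ n, Integrable (F n) μ) (hFf : ∀ x, Tendsto (fun n => F n x) atTop (𝓝 (f x)))
    (hFB : ∀ n, ∫ x, F n x ∂μ ≤ B n) (hB : Tendsto B atTop (𝓝 b)) :
    Integrable f μ ∧ ∫ x, f x ∂μ ≤ b := by
  have hf_nonneg : 0 ≤ᵐ[μ] f := ae_of_all _ fun x => ge_of_tendsto' (hFf x) (hF_nonneg · x)
  have hf_meas : AEStronglyMeasurable f μ :=
    aestronglyMeasurable_of_tendsto_ae atTop (fun n => (hF n).1) (ae_of_all _ hFf)
  have hb : 0 ≤ b := ge_of_tendsto' hB fun n => (integral_nonneg (hF_nonneg n)).trans (hFB n)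
  have hofReal := ENNReal.continuous_ofReal.tendsto
  have hfatou : ∫⁻ x, ENNReal.ofReal (f x) ∂μ ≤ ENNReal.ofReal b :=
    calc ∫⁻ x, ENNReal.ofReal (f x) ∂μ
        = ∫⁻ x, liminf (fun n => ENNReal.ofReal (F n x)) atTop ∂μ :=
          lintegral_congr fun x => (((hofReal _).comp (hFf x)).liminf_eq).symm
      _ ≤ liminf (fun n => ∫⁻ x, ENNReal.ofReal (F n x) ∂μ) atTop :=
          lintegral_liminf_le' fun n => (hF n).1.aemeasurable.ennreal_ofReal
      _ = liminf (fun n => ENNReal.ofReal (∫ x, F n x ∂μ)) atTop := by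
          simp_rw [ofReal_integral_eq_lintegral_ofReal (hF _) (ae_of_all _ (hF_nonneg _))]
      _ ≤ liminf (fun n => ENNReal.ofReal (B n)) atTop :=
          liminf_le_liminf (Eventually.of_forall fun n => ENNReal.ofReal_le_ofReal (hFB n))
      _ = ENNReal.ofReal b := ((hofReal _).comp hB).liminf_eq
  refine ⟨⟨hf_meas, (hasFiniteIntegral_iff_ofReal hf_nonneg).2
    (hfatou.trans_lt ENNReal.ofReal_lt_top)⟩, ?_⟩
  rw [integral_eq_lintegral_of_nonneg_ae hf_nonneg hf_meas]
  exact ENNReal.toReal_le_of_le_ofReal hb hfatou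

section FiniteDimensional

variable [FiniteDimensional ℝ E] [BorelSpace E]

theorem LipschitzWith.exists_contDiff_lipschitzWith_dist_le
    {F : Type*} [NormedAddCommGroup F] [NormedSpace ℝ F] [CompleteSpace F]
    {K : NNReal} {f : E → F} (hf : LipschitzWith K f) {ε : ℝ} (hε : 0 < ε) :
    ∃ g : E → F, ContDiff ℝ ∞ g ∧ LipschitzWith K g ∧ ∀ x, dist (g x) (f x) ≤ K * ε := by
  let μ : Measure E := Measure.addHaar
  let φ : ContDiffBump (0 : E) := ⟨ε / 2, ε, half_pos hε, half_lt_self hε⟩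
  have hint (x : E) : Integrable (fun t => φ.normed μ t • f (x - t)) μ :=
    Continuous.integrable_of_hasCompactSupport
      (φ.continuous_normed.smul (hf.continuous.comp (continuous_sub_left x)))
      φ.hasCompactSupport_normed.smul_right
  refine ⟨φ.normed μ ⋆[lsmul ℝ ℝ, μ] f, ?_, ?_, fun x => ?_⟩
  · exact φ.hasCompactSupport_normed.contDiff_convolution_left (lsmul ℝ ℝ) φ.contDiff_normed
      hf.continuous.locallyIntegrable
  · refine LipschitzWith.of_dist_le_mul fun x y => ?_
    have hpt (t : E) : ‖φ.normed μ t • f (x - t) - φ.normed μ t • f (y - t)‖ ≤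
        φ.normed μ t * (K * dist x y) := by
      rw [← smul_sub, norm_smul, Real.norm_of_nonneg (φ.nonneg_normed t), ← dist_eq_norm,
        ← dist_sub_right x y t]
      exact mul_le_mul_of_nonneg_left (hf.dist_le_mul _ _) (φ.nonneg_normed t)
    calc dist ((φ.normed μ ⋆[lsmul ℝ ℝ, μ] f) x) ((φ.normed μ ⋆[lsmul ℝ ℝ, μ] f) y)
        = ‖∫ t, (φ.normed μ t • f (x - t) - φ.normed μ t • f (y - t)) ∂μ‖ := by
          rw [dist_eq_norm, convolution_lsmul, convolution_lsmul, integral_sub (hint x) (hint y)]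
      _ ≤ ∫ t, φ.normed μ t * (K * dist x y) ∂μ :=
          norm_integral_le_of_norm_le (φ.integrable_normed.mul_const _) (ae_of_all _ hpt)
      _ = K * dist x y := by rw [integral_mul_const, φ.integral_normed, one_mul]
  · refine φ.dist_normed_convolution_le hf.continuous.aestronglyMeasurable fun y hy => ?_
    exact (hf.dist_le_mul y x).trans (mul_le_mul_of_nonneg_left (Metric.mem_ball.1 hy).le K.2)

theorem LipschitzWith.exists_seq_bounded_contDiff_tendsto {K : NNReal} {f : E → ℝ}
    (hf : LipschitzWith K f) :
    ∃ g : ℕ → E → ℝ, (∀ m, ContDiff ℝ ∞ (g m) ∧ LipschitzWith K (g m) ∧ ∃ M, ∀ x, |g m x| ≤ M) ∧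
      (∀ m x, |g m x| ≤ |f x| + K) ∧ ∀ x, Tendsto (fun m => g m x) atTop (𝓝 (f x)) := by
  set trunc : ℕ → E → ℝ := fun m x => max (-m) (min (f x) m)
  have htrunc_lip (m : ℕ) : LipschitzWith K (trunc m) := (hf.min_const _).const_max _
  have htrunc_le_m (m : ℕ) (x : E) : |trunc m x| ≤ m := by grind [abs_le]
  have htrunc_le_f (m : ℕ) (x : E) : |trunc m x| ≤ |f x| := by
    grind [abs_le, le_abs_self, neg_abs_le]
  have htrunc_tendsto (x : E) : Tendsto (fun m => trunc m x) atTop (𝓝 (f x)) :=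
    tendsto_atTop_of_eventually_const (i₀ := ⌈|f x|⌉₊) fun m hm => by
      have : |f x| ≤ m := (Nat.le_ceil _).trans (by exact_mod_cast hm)
      grind [abs_le]
  choose g hg_smooth hg_lip hg_dist using fun m : ℕ =>
    (htrunc_lip m).exists_contDiff_lipschitzWith_dist_le (Nat.one_div_pos_of_nat (n := m))
  have hg_sub (m : ℕ) (x : E) : |g m x - trunc m x| ≤ K :=
    (hg_dist m x).trans (mul_le_of_le_one_right K.2 (div_le_one_of_le₀ (by simp) (by positivity)))
  refine ⟨g, fun m => ⟨hg_smooth m, hg_lip m, m + K, fun x => ?_⟩, fun m x => ?_, fun x => ?_⟩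
  · linarith [abs_sub_abs_le_abs_sub (g m x) (trunc m x), hg_sub m x, htrunc_le_m m x]
  · linarith [abs_sub_abs_le_abs_sub (g m x) (trunc m x), hg_sub m x, htrunc_le_f m x]
  · have hsub : Tendsto (fun m => g m x - trunc m x) atTop (𝓝 0) := by
      refine squeeze_zero_norm (fun m => hg_dist m x) ?_
      simpa using tendsto_one_div_add_atTop_nhds_zero_nat.const_mul (K : ℝ)
    simpa using hsub.add (htrunc_tendsto x)

end FiniteDimensional

namespace PoincareInequality

variable [BorelSpace E] {μ : Measure E} [IsProbabilityMeasure μ] {C : ℝ}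

theorem integral_sq_sub_sq_integral_le (hPI : PoincareInequality μ C) {f : E → ℝ}
    (hf : Differentiable ℝ f) (hf2 : Integrable (fun x => f x ^ 2) μ)
    (hdf : Integrable (fun x => ‖fderiv ℝ f x‖ ^ 2) μ) :
    ∫ x, f x ^ 2 ∂μ - (∫ x, f x ∂μ) ^ 2 ≤ C * ∫ x, ‖fderiv ℝ f x‖ ^ 2 ∂μ := by
  have hf_meas := hf.continuous.aestronglyMeasurable (μ := μ)
  have hL2 : MemLp f 2 μ := (memLp_two_iff_integrable_sq hf_meas).2 hf2
  have hvar := ProbabilityTheory.variance_eq_sub hL2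
  rw [ProbabilityTheory.variance_eq_integral hf_meas.aemeasurable] at hvar
  simp only [Pi.pow_apply] at hvar
  rw [← hvar]
  exact hPI f hf (hL2.integrable one_le_two) hf2 hdf

theorem integral_exp_sub_sq_le (hPI : PoincareInequality μ C) (hC : 0 ≤ C) {g : E → ℝ}
    (hg : Differentiable ℝ g) (hlip : LipschitzWith 1 g) {M : ℝ} (hM : ∀ x, |g x| ≤ M)
    (c : ℝ) :
    ∫ x, exp (2 * c * g x) ∂μ - (∫ x, exp (c * g x) ∂μ) ^ 2 ≤
      C * c ^ 2 * ∫ x, exp (2 * c * g x) ∂μ := by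
  set F : E → ℝ := fun x => exp (c * g x)
  have hF_sq (x : E) : F x ^ 2 = exp (2 * c * g x) := by
    rw [← Real.exp_nat_mul]; push_cast; ring_nf
  have hF_deriv (x : E) : HasFDerivAt F (F x • c • fderiv ℝ g x) x :=
    ((hg x).hasFDerivAt.const_mul c).exp
  have hF_deriv_sq (x : E) : ‖fderiv ℝ F x‖ ^ 2 ≤ c ^ 2 * exp (2 * c * g x) := by
    have hg' : ‖fderiv ℝ g x‖ ≤ 1 := by simpa using norm_fderiv_le_of_lipschitz ℝ hlip (x₀ := x)
    rw [(hF_deriv x).fderiv, ← hF_sq, norm_smul, norm_smul, mul_pow, mul_pow, Real.norm_eq_abs,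
      sq_abs, Real.norm_eq_abs, sq_abs, mul_left_comm]
    exact mul_le_mul_of_nonneg_left
      (mul_le_of_le_one_right (sq_nonneg _) (pow_le_one₀ (norm_nonneg _) hg')) (sq_nonneg c)
  have hexp_int : Integrable (fun x => exp (2 * c * g x)) μ :=
    integrable_exp_mul_of_abs_le hg.continuous.aestronglyMeasurable hM _
  have hdF_int : Integrable (fun x => ‖fderiv ℝ F x‖ ^ 2) μ :=
    (hexp_int.const_mul _).mono' ((measurable_fderiv ℝ F).norm.pow_const 2).aestronglyMeasurable
      (ae_of_all _ fun x => by simpa using hF_deriv_sq x)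
  calc ∫ x, exp (2 * c * g x) ∂μ - (∫ x, F x ∂μ) ^ 2
      = ∫ x, F x ^ 2 ∂μ - (∫ x, F x ∂μ) ^ 2 := by simp only [hF_sq]
    _ ≤ C * ∫ x, ‖fderiv ℝ F x‖ ^ 2 ∂μ :=
        hPI.integral_sq_sub_sq_integral_le (fun x => (hF_deriv x).differentiableAt)
          (by simpa only [hF_sq] using hexp_int) hdF_int
    _ ≤ C * ∫ x, c ^ 2 * exp (2 * c * g x) ∂μ :=
        mul_le_mul_of_nonneg_left (integral_mono hdF_int (hexp_int.const_mul _) hF_deriv_sq) hC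
    _ = C * c ^ 2 * ∫ x, exp (2 * c * g x) ∂μ := by rw [integral_const_mul, mul_assoc]

theorem integral_exp_pow_two_pow_le_succ (hPI : PoincareInequality μ C) (hC : 0 ≤ C) {l : ℝ}
    (hl : C * l ^ 2 ≤ 1) {g : E → ℝ} (hg : Differentiable ℝ g) (hlip : LipschitzWith 1 g)
    {M : ℝ} (hM : ∀ x, |g x| ≤ M) (k : ℕ) :
    (∫ x, exp (l * 2⁻¹ ^ k * g x) ∂μ) ^ 2 ^ k ≤
      exp (2⁻¹ ^ (k + 1)) * (∫ x, exp (l * 2⁻¹ ^ (k + 1) * g x) ∂μ) ^ 2 ^ (k + 1) := by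
  set A : ℝ → ℝ := fun c => ∫ x, exp (c * g x) ∂μ
  have hA_pos (c : ℝ) : 0 < A c :=
    integral_exp_pos (integrable_exp_mul_of_abs_le hg.continuous.aestronglyMeasurable hM c)
  set q : ℝ := (2⁻¹ ^ (k + 1)) ^ 2
  have hq : C * (l * 2⁻¹ ^ (k + 1)) ^ 2 ≤ q := by
    rw [mul_pow, ← mul_assoc]; exact mul_le_of_le_one_left (sq_nonneg _) hl
  have hPI_step := hPI.integral_exp_sub_sq_le hC hg hlip hM (l * 2⁻¹ ^ (k + 1))
  rw [show 2 * (l * 2⁻¹ ^ (k + 1)) = l * 2⁻¹ ^ k by ring] at hPI_step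
  have hsq : (1 - q) * A (l * 2⁻¹ ^ k) ≤ A (l * 2⁻¹ ^ (k + 1)) ^ 2 := by
    nlinarith [hA_pos (l * 2⁻¹ ^ k)]
  have hhalf_pow : (2 : ℝ)⁻¹ ^ (k + 1) ≤ 1 / 2 := by
    simpa using pow_le_of_le_one (by norm_num : (0 : ℝ) ≤ 2⁻¹) (by norm_num) k.succ_ne_zero
  have hq_le : q ≤ 1 / 2 :=
    (pow_le_of_le_one (by positivity) (by linarith) two_ne_zero).trans hhalf_pow
  calc A (l * 2⁻¹ ^ k) ^ 2 ^ k ≤ (exp (2 * q) * A (l * 2⁻¹ ^ (k + 1)) ^ 2) ^ 2 ^ k :=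
        pow_le_pow_left₀ (hA_pos _).le (le_exp_two_mul_mul_of_one_sub_mul_le (by positivity)
          hq_le (hA_pos _).le hsq) _
    _ = exp (2⁻¹ ^ (k + 1)) * A (l * 2⁻¹ ^ (k + 1)) ^ 2 ^ (k + 1) := by
        rw [mul_pow, ← Real.exp_nat_mul, ← pow_mul, ← pow_succ']
        congr 2
        push_cast
        have hpow : (2 : ℝ) ^ (k + 1) * 2⁻¹ ^ (k + 1) = 1 := by rw [← mul_pow]; norm_num
        linear_combination 2⁻¹ ^ (k + 1) * hpow

theorem integral_exp_le_of_abs_le (hPI : PoincareInequality μ C) (hC : 0 ≤ C) {l : ℝ}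
    (hl : C * l ^ 2 ≤ 1) {g : E → ℝ} (hg : Differentiable ℝ g) (hlip : LipschitzWith 1 g)
    {M : ℝ} (hM : ∀ x, |g x| ≤ M) :
    ∫ x, exp (l * g x) ∂μ ≤ exp (1 + l * ∫ x, g x ∂μ) := by
  set A : ℝ → ℝ := fun c => ∫ x, exp (c * g x) ∂μ
  have hpow (k : ℕ) : (2 : ℝ) ^ k * 2⁻¹ ^ k = 1 := by rw [← mul_pow]; norm_num
  have hhalf : Tendsto (fun N : ℕ => (2 : ℝ)⁻¹ ^ N) atTop (𝓝 0) :=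
    tendsto_pow_atTop_nhds_zero_of_lt_one (by norm_num) (by norm_num)
  have hsmall : ∀ᶠ N : ℕ in atTop, |l| * M * 2⁻¹ ^ N ≤ 1 := by
    have := hhalf.const_mul (|l| * M)
    rw [mul_zero] at this
    exact this.eventually (eventually_le_nhds one_pos)
  have hbound : ∀ᶠ N : ℕ in atTop, A l ≤
      exp (1 + l * ∫ x, g x ∂μ + 2⁻¹ ^ N * (l ^ 2 * M ^ 2 - 1)) := by
    filter_upwards [hsmall] with N hN
    have hsmall_N : |l * 2⁻¹ ^ N| * M ≤ 1 := by
      rw [abs_mul, abs_of_pos (by positivity : (0 : ℝ) < 2⁻¹ ^ N)]; linarith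
    calc A l = A (l * 2⁻¹ ^ 0) ^ 2 ^ 0 := by simp
      _ ≤ exp (1 - 2⁻¹ ^ N) * A (l * 2⁻¹ ^ N) ^ 2 ^ N :=
          le_exp_one_sub_mul_of_le_exp_mul
            (hPI.integral_exp_pow_two_pow_le_succ hC hl hg hlip hM) N
      _ ≤ exp (1 - 2⁻¹ ^ N) *
          exp (l * 2⁻¹ ^ N * ∫ x, g x ∂μ + (l * 2⁻¹ ^ N) ^ 2 * M ^ 2) ^ 2 ^ N := by
          gcongr
          exact integral_exp_mul_le_of_abs_le hg.continuous.aestronglyMeasurable hM hsmall_N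
      _ = exp (1 + l * ∫ x, g x ∂μ + 2⁻¹ ^ N * (l ^ 2 * M ^ 2 - 1)) := by
          rw [← Real.exp_nat_mul, ← Real.exp_add]
          congr 1
          push_cast
          linear_combination (l * ∫ x, g x ∂μ + 2⁻¹ ^ N * l ^ 2 * M ^ 2) * hpow N
  have hlim := ((hhalf.mul_const (l ^ 2 * M ^ 2 - 1)).const_add (1 + l * ∫ x, g x ∂μ)).rexp
  rw [zero_mul, add_zero] at hlim
  exact ge_of_tendsto hlim hbound

section FiniteDimensional

variable [FiniteDimensional ℝ E]

theorem integrable_exp_and_integral_exp_le (hPI : PoincareInequality μ C) (hC : 0 ≤ C)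
    {l : ℝ} (hl : C * l ^ 2 ≤ 1) {f : E → ℝ} (hf : LipschitzWith 1 f) (hf_int : Integrable f μ) :
    Integrable (fun x => exp (l * f x)) μ ∧ ∫ x, exp (l * f x) ∂μ ≤ exp (1 + l * ∫ x, f x ∂μ) := by
  obtain ⟨g, hg, hg_le, hg_tendsto⟩ := hf.exists_seq_bounded_contDiff_tendsto
  have hg_int (m : ℕ) : Integrable (g m) μ := by
    obtain ⟨-, hlip, M, hM⟩ := hg m
    exact .of_bound hlip.continuous.aestronglyMeasurable M (ae_of_all _ hM)
  have hint_tendsto : Tendsto (fun m => ∫ x, g m x ∂μ) atTop (𝓝 (∫ x, f x ∂μ)) :=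
    tendsto_integral_of_dominated_convergence (fun x => |f x| + 1)
      (fun m => (hg_int m).1) (hf_int.abs.add (integrable_const _))
      (fun m => ae_of_all _ fun x => by simpa using hg_le m x) (ae_of_all _ hg_tendsto)
  refine integrable_and_integral_le_of_tendsto (fun m x => (Real.exp_pos _).le)
    (fun m => ?_) (fun x => ((hg_tendsto x).const_mul l).rexp) (fun m => ?_)
    ((hint_tendsto.const_mul l).const_add 1).rexp
  · obtain ⟨-, hlip, M, hM⟩ := hg m
    exact integrable_exp_mul_of_abs_le hlip.continuous.aestronglyMeasurable hM l
  · obtain ⟨hsmooth, hlip, M, hM⟩ := hg m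
    exact hPI.integral_exp_le_of_abs_le hC hl (hsmooth.differentiable (by simp)) hlip hM

theorem measure_sub_integral_ge_le (hPI : PoincareInequality μ C) (hC : 0 ≤ C) {l : ℝ}
    (hl₀ : 0 ≤ l) (hl : C * l ^ 2 ≤ 1) {f : E → ℝ} (hf : LipschitzWith 1 f)
    (hf_int : Integrable f μ) (t : ℝ) :
    μ {x | t ≤ f x - ∫ y, f y ∂μ} ≤ ENNReal.ofReal (exp (1 - l * t)) := by
  obtain ⟨hexp_int, hexp_le⟩ := hPI.integrable_exp_and_integral_exp_le hC hl hf hf_int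
  simp_rw [le_sub_iff_add_le']
  rw [← ofReal_measureReal]
  refine ENNReal.ofReal_le_ofReal
    ((ProbabilityTheory.measure_ge_le_exp_mul_mgf _ hl₀ hexp_int).trans ?_)
  calc exp (-l * (∫ y, f y ∂μ + t)) * ProbabilityTheory.mgf f μ l
      ≤ exp (-l * (∫ y, f y ∂μ + t)) * exp (1 + l * ∫ x, f x ∂μ) := by
        gcongr; exact hexp_le
    _ = exp (1 - l * t) := by rw [← Real.exp_add]; ring_nf

end FiniteDimensional

end PoincareInequality

theorem stmt12 (n : ℕ) (π : Measure (EuclideanSpace ℝ (Fin n))) [IsProbabilityMeasure π]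
    (Cpi : ℝ) (hCpi : 0 < Cpi)
    -- Poincaré inequality with constant `Cpi`
    (hPI : ∀ f : EuclideanSpace ℝ (Fin n) → ℝ, Differentiable ℝ f →
      Integrable f π → Integrable (fun x => f x ^ 2) π →
      Integrable (fun x => ‖fderiv ℝ f x‖ ^ 2) π →
      ∫ x, (f x - ∫ y, f y ∂π) ^ 2 ∂π ≤ Cpi * ∫ x, ‖fderiv ℝ f x‖ ^ 2 ∂π) :
    ∀ f : EuclideanSpace ℝ (Fin n) → ℝ, LipschitzWith 1 f → Integrable f π →
      ∀ t : ℝ, 0 ≤ t →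
        π {x | t ≤ f x - ∫ y, f y ∂π} ≤
          ENNReal.ofReal (3 * Real.exp (-t / Real.sqrt Cpi)) := by
  intro f hf hf_int t _
  have hl : Cpi * (Real.sqrt Cpi)⁻¹ ^ 2 ≤ 1 := by
    rw [inv_pow, Real.sq_sqrt hCpi.le, mul_inv_cancel₀ hCpi.ne']
  refine (PoincareInequality.measure_sub_integral_ge_le hPI hCpi.le (by positivity) hl hf hf_int
    t).trans (ENNReal.ofReal_le_ofReal ?_)
  rw [sub_eq_add_neg, Real.exp_add, neg_div, div_eq_inv_mul]
  gcongr
  linarith [Real.exp_one_lt_d9]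
end
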